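/- arXiv:2601.09867 — 3 statements merged into one kernel-verified Lean document; each statement's English description precedes it below -/
import Mathlib

section
/- Let X and Y be independent exponential random variables with means Ω₁ > 0 and Ω₂ > 0, respectively, and let Z = X·Y. Then Z has probability density function f_Z(z) = (2/(Ω₁Ω₂))·K₀(2√(z/(Ω₁Ω₂))) for z > 0. -/
/-!
By independence, the law of `X * Y` is the multiplicative convolution of the laws of `X` and `Y`;
for laws with densities `f` and `g` on `ℝ` it has the density `z ↦ ∫ f x |x|⁻¹ g (z / x) dx`.
For exponential densities and `z = a² Ω₁ Ω₂ > 0`, the substitution `x = a Ω₁ eᵗ` turns this integral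
into `(Ω₁ Ω₂)⁻¹ ∫_ℝ exp (-2a cosh t) dt`, and by evenness the last integral is `2 K₀(2a)`.
-/

open MeasureTheory ProbabilityTheory Real

/-- Modified Bessel function of the second kind of order zero (Macdonald function),
via its integral representation. -/
noncomputable def K0 (x : ℝ) : ℝ :=
  ∫ t in Set.Ioi (0 : ℝ), Real.exp (-x * Real.cosh t)

/-- Density of an exponential random variable with mean `Ω`. -/
noncomputable def expDens (Ω x : ℝ) : ℝ :=
  if 0 ≤ x then 1 / Ω * Real.exp (-x / Ω) else 0

open Set
open scoped ENNReal

namespace Real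

lemma lintegral_comp_mul_left {c : ℝ} (hc : c ≠ 0) (F : ℝ → ℝ≥0∞) :
    ∫⁻ y, F (c * y) = ENNReal.ofReal |c⁻¹| * ∫⁻ z, F z := by
  rw [← smul_eq_mul, ← lintegral_smul_measure, ← map_volume_mul_left hc]
  exact (lintegral_map_equiv F (MeasurableEquiv.mulLeft₀ c hc)).symm

theorem withDensity_mconv_withDensity {f g : ℝ → ℝ≥0∞} (hf : Measurable f)
    (hg : Measurable g) :
    volume.withDensity f ∗ₘ volume.withDensity g =
      volume.withDensity (fun z => ∫⁻ x, f x * ENNReal.ofReal |x⁻¹| * g (z / x)) := by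
  refine Measure.ext_of_lintegral _ fun φ hφ => ?_
  have slice (x : ℝ) (hx : x ≠ 0) : ∫⁻ y, f x * g y * φ (x * y) =
      ∫⁻ z, f x * ENNReal.ofReal |x⁻¹| * g (z / x) * φ z := by
    simpa only [mul_div_cancel_left₀ _ hx, mul_assoc, mul_left_comm (ENNReal.ofReal _),
      ← lintegral_const_mul' _ _ ENNReal.ofReal_ne_top] using
      lintegral_comp_mul_left hx (fun z => f x * (g (z / x) * φ z))
  rw [Measure.lintegral_mconv_eq_lintegral_prod hφ, prod_withDensity hf hg,
    lintegral_withDensity_eq_lintegral_mul _ (by fun_prop) (by fun_prop),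
    lintegral_prod _ (by fun_prop), lintegral_withDensity_eq_lintegral_mul _ (by fun_prop) hφ]
  calc ∫⁻ x, ∫⁻ y, f x * g y * φ (x * y)
      = ∫⁻ x, ∫⁻ z, f x * ENNReal.ofReal |x⁻¹| * g (z / x) * φ z :=
        lintegral_congr_ae ((Measure.ae_ne volume 0).mono slice)
    _ = ∫⁻ z, (∫⁻ x, f x * ENNReal.ofReal |x⁻¹| * g (z / x)) * φ z := by
        rw [lintegral_lintegral_swap (by fun_prop)]
        exact lintegral_congr fun z => lintegral_mul_const _ (by fun_prop)

lemma lintegral_eq_two_mul_setLIntegral_Ioi_of_even {F : ℝ → ℝ≥0∞} (hF : ∀ t, F (-t) = F t) :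
    ∫⁻ t, F t = 2 * ∫⁻ t in Ioi 0, F t := by
  have hIic : ∫⁻ t in Iic 0, F t = ∫⁻ t in Ioi 0, F t := by
    rw [← (Measure.measurePreserving_neg volume).setLIntegral_comp_preimage_emb
      (Homeomorph.neg ℝ).measurableEmbedding, neg_preimage, neg_Iic, neg_zero,
      Measure.restrict_congr_set Ioi_ae_eq_Ici.symm]
    simp only [hF]
  rw [← lintegral_add_compl F measurableSet_Ioi, compl_Ioi, hIic, two_mul]

lemma setLIntegral_Ioi_zero_eq_lintegral_comp_mul_exp {c : ℝ} (hc : 0 < c) (F : ℝ → ℝ≥0∞) :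
    ∫⁻ x in Ioi 0, F x = ∫⁻ t, ENNReal.ofReal (c * exp t) * F (c * exp t) := by
  have himage : (fun t => c * exp t) '' univ = Ioi 0 := by
    rw [image_univ, show (fun t => c * exp t) = (c * ·) ∘ exp from rfl, range_comp, range_exp,
      image_mul_left_Ioi hc, mul_zero]
  have hderiv (t : ℝ) : HasDerivWithinAt (fun t => c * exp t) (c * exp t) univ t :=
    ((hasDerivAt_exp t).const_mul c).hasDerivWithinAt
  have hinj : InjOn (fun t => c * exp t) univ := fun s _ t _ h =>
    exp_injective (mul_left_cancel₀ hc.ne' h)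
  rw [← himage, lintegral_image_eq_lintegral_abs_deriv_mul MeasurableSet.univ
    (fun t _ => hderiv t) hinj, Measure.restrict_univ]
  simp_rw [abs_of_pos (mul_pos hc (exp_pos _))]

end Real

lemma integrableOn_exp_neg_mul_cosh {b : ℝ} (hb : 0 < b) :
    IntegrableOn (fun t => exp (-b * cosh t)) (Ioi 0) := by
  refine (exp_neg_integrableOn_Ioi 0 hb).mono' (by fun_prop) ?_
  filter_upwards [self_mem_ae_restrict measurableSet_Ioi] with t ht
  rw [norm_of_nonneg (exp_pos _).le, exp_le_exp, neg_mul, neg_mul, neg_le_neg_iff]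
  exact mul_le_mul_of_nonneg_left ((self_le_sinh_iff.mpr ht.le).trans (sinh_lt_cosh t).le) hb.le

lemma ofReal_K0 {b : ℝ} (hb : 0 < b) :
    ENNReal.ofReal (K0 b) = ∫⁻ t in Ioi 0, ENNReal.ofReal (exp (-b * cosh t)) :=
  ofReal_integral_eq_lintegral_ofReal (integrableOn_exp_neg_mul_cosh hb)
    (Filter.Eventually.of_forall fun _ => (exp_pos _).le)

lemma measurable_expDens (Ω : ℝ) : Measurable (expDens Ω) :=
  Measurable.ite (measurableSet_le measurable_const measurable_id) (by fun_prop) (by fun_prop)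

lemma expDens_nonneg {Ω : ℝ} (hΩ : 0 ≤ Ω) (x : ℝ) : 0 ≤ expDens Ω x := by
  unfold expDens
  split_ifs <;> positivity

lemma expDens_of_neg {Ω x : ℝ} (hx : x < 0) : expDens Ω x = 0 := if_neg (not_le.mpr hx)

lemma expDens_mul_expDens_div_eq_exp_cosh {Ω₁ Ω₂ a x t : ℝ} (h1 : 0 < Ω₁) (h2 : 0 < Ω₂)
    (ha : 0 < a) (hx : x = a * Ω₁ * exp t) :
    expDens Ω₁ x * expDens Ω₂ (a ^ 2 * (Ω₁ * Ω₂) / x) =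
      1 / (Ω₁ * Ω₂) * exp (-(2 * a) * cosh t) := by
  have hx0 : 0 < x := hx ▸ by positivity
  have hsum : -(2 * a) * cosh t = -x / Ω₁ + -(a ^ 2 * (Ω₁ * Ω₂) / x) / Ω₂ := by
    simp only [hx, cosh_eq, exp_neg]
    field_simp
    ring
  rw [expDens, expDens, if_pos hx0.le, if_pos (by positivity), hsum, exp_add]
  field_simp

noncomputable def expProductDensity (Ω₁ Ω₂ z : ℝ) : ℝ≥0∞ :=
  ∫⁻ x, ENNReal.ofReal (expDens Ω₁ x) * ENNReal.ofReal |x⁻¹| *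
    ENNReal.ofReal (expDens Ω₂ (z / x))

lemma expProductDensity_of_neg (Ω₁ Ω₂ : ℝ) {z : ℝ} (hz : z < 0) :
    expProductDensity Ω₁ Ω₂ z = 0 := by
  refine lintegral_eq_zero_of_ae_eq_zero (Filter.Eventually.of_forall fun x => ?_)
  rcases lt_trichotomy x 0 with hx | rfl | hx
  · simp [expDens_of_neg hx]
  · simp
  · simp [expDens_of_neg (div_neg_of_neg_of_pos hz hx)]

lemma expProductDensity_sq_mul {Ω₁ Ω₂ a : ℝ} (h1 : 0 < Ω₁) (h2 : 0 < Ω₂) (ha : 0 < a) :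
    expProductDensity Ω₁ Ω₂ (a ^ 2 * (Ω₁ * Ω₂)) = ENNReal.ofReal (2 / (Ω₁ * Ω₂) * K0 (2 * a)) := by
  have hsupport : (Function.support fun x => ENNReal.ofReal (expDens Ω₁ x) *
      ENNReal.ofReal |x⁻¹| * ENNReal.ofReal (expDens Ω₂ (a ^ 2 * (Ω₁ * Ω₂) / x))) ⊆ Ioi 0 := by
    intro x hx
    rw [mem_Ioi]
    by_contra! hx0
    rcases hx0.lt_or_eq with hneg | rfl
    · simp [expDens_of_neg hneg] at hx
    · simp at hx
  calc expProductDensity Ω₁ Ω₂ (a ^ 2 * (Ω₁ * Ω₂))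
      = ∫⁻ x in Ioi 0, ENNReal.ofReal (expDens Ω₁ x) * ENNReal.ofReal |x⁻¹| *
          ENNReal.ofReal (expDens Ω₂ (a ^ 2 * (Ω₁ * Ω₂) / x)) :=
        (setLIntegral_eq_of_support_subset hsupport).symm
    _ = ∫⁻ t, ENNReal.ofReal (1 / (Ω₁ * Ω₂)) * ENNReal.ofReal (exp (-(2 * a) * cosh t)) := by
        rw [setLIntegral_Ioi_zero_eq_lintegral_comp_mul_exp (mul_pos ha h1)]
        refine lintegral_congr fun t => ?_
        have hx : 0 < a * Ω₁ * exp t := by positivity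
        rw [← ENNReal.ofReal_mul (expDens_nonneg h1.le _),
          ← ENNReal.ofReal_mul (mul_nonneg (expDens_nonneg h1.le _) (abs_nonneg _)),
          ← ENNReal.ofReal_mul hx.le, ← ENNReal.ofReal_mul (by positivity),
          ← expDens_mul_expDens_div_eq_exp_cosh h1 h2 ha rfl, abs_of_pos (inv_pos.2 hx)]
        congr 1
        field_simp
    _ = ENNReal.ofReal (2 / (Ω₁ * Ω₂) * K0 (2 * a)) := by
        rw [lintegral_const_mul' _ _ ENNReal.ofReal_ne_top,
          lintegral_eq_two_mul_setLIntegral_Ioi_of_even (fun t => by rw [cosh_neg]),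
          ← ofReal_K0 (by positivity), show 2 / (Ω₁ * Ω₂) = 1 / (Ω₁ * Ω₂) * 2 by ring,
          ENNReal.ofReal_mul (by positivity), ENNReal.ofReal_mul (by positivity),
          ENNReal.ofReal_ofNat, mul_assoc]

lemma expProductDensity_ae_eq {Ω₁ Ω₂ : ℝ} (h1 : 0 < Ω₁) (h2 : 0 < Ω₂) :
    expProductDensity Ω₁ Ω₂ =ᵐ[volume] fun z => ENNReal.ofReal
      (if 0 < z then 2 / (Ω₁ * Ω₂) * K0 (2 * Real.sqrt (z / (Ω₁ * Ω₂))) else 0) := by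
  filter_upwards [Measure.ae_ne volume 0] with z hz
  rcases hz.lt_or_gt with hneg | hpos
  · rw [expProductDensity_of_neg Ω₁ Ω₂ hneg, if_neg hneg.not_gt, ENNReal.ofReal_zero]
  · have hz : z = sqrt (z / (Ω₁ * Ω₂)) ^ 2 * (Ω₁ * Ω₂) := by
      rw [sq_sqrt (by positivity)]
      field_simp
    rw [if_pos hpos]
    conv_lhs => rw [hz]
    exact expProductDensity_sq_mul h1 h2 (sqrt_pos.2 (by positivity))

/-- The product of two independent exponential random variables with means `Ω₁, Ω₂`
has density `z ↦ (2/(Ω₁Ω₂)) K₀(2√(z/(Ω₁Ω₂)))` on `z > 0`. -/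
theorem product_exponential_density
    {Ω : Type*} [MeasureSpace Ω] [IsProbabilityMeasure (ℙ : Measure Ω)]
    (X Y : Ω → ℝ) (hX : Measurable X) (hY : Measurable Y)
    (Ω₁ Ω₂ : ℝ) (hΩ₁ : 0 < Ω₁) (hΩ₂ : 0 < Ω₂)
    (hindep : IndepFun X Y ℙ)
    (hXlaw : Measure.map X ℙ =
      MeasureTheory.volume.withDensity (fun x => ENNReal.ofReal (expDens Ω₁ x)))
    (hYlaw : Measure.map Y ℙ =
      MeasureTheory.volume.withDensity (fun y => ENNReal.ofReal (expDens Ω₂ y))) :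
    Measure.map (fun ω => X ω * Y ω) ℙ =
      MeasureTheory.volume.withDensity (fun z => ENNReal.ofReal
        (if 0 < z then 2 / (Ω₁ * Ω₂) * K0 (2 * Real.sqrt (z / (Ω₁ * Ω₂))) else 0)) := by
  change Measure.map (X * Y) ℙ = _
  rw [hindep.map_mul_eq_map_mconv_map hX hY, hXlaw, hYlaw,
    withDensity_mconv_withDensity (measurable_expDens Ω₁).ennreal_ofReal
      (measurable_expDens Ω₂).ennreal_ofReal]
  exact withDensity_congr_ae (expProductDensity_ae_eq hΩ₁ hΩ₂)
end

section
/- For a > 0 and b > 0, the integral ∫₀^∞ x^(−1)·exp(−a·x − b/x) dx equals 2·K₀(2√(ab)). -/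
open MeasureTheory Real

/-- Macdonald-function integral:
`∫₀^∞ x⁻¹ exp(-a x - b/x) dx = 2 K₀(2√(ab))` for `a, b > 0`. -/
theorem macdonald_integral (a b : ℝ) (ha : 0 < a) (hb : 0 < b) :
    ∫ x in Set.Ioi (0 : ℝ), x⁻¹ * Real.exp (-a * x - b / x) =
      2 * K0 (2 * Real.sqrt (a * b)) := by
  set c : ℝ := Real.sqrt (b / a) with hc
  have hc0 : 0 < c := Real.sqrt_pos.mpr (div_pos hb ha)
  have hc2 : c ^ 2 = b / a := Real.sq_sqrt (div_pos hb ha).le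
  set k : ℝ := 2 * Real.sqrt (a * b) with hk
  have himg : (fun t : ℝ => c * Real.exp t) '' Set.univ = Set.Ioi 0 := by
    ext x
    simp only [Set.image_univ, Set.mem_range, Set.mem_Ioi]
    constructor
    · rintro ⟨t, rfl⟩; positivity
    · intro hx
      refine ⟨Real.log (x / c), ?_⟩
      rw [Real.exp_log (by positivity)]; field_simp
  have hderiv : ∀ t ∈ (Set.univ : Set ℝ),
      HasDerivWithinAt (fun t : ℝ => c * Real.exp t) (c * Real.exp t) Set.univ t :=
    fun t _ => ((Real.hasDerivAt_exp t).const_mul c).hasDerivWithinAt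
  have hinj : Set.InjOn (fun t : ℝ => c * Real.exp t) Set.univ := by
    intro s _ t _ h
    simpa using Real.exp_injective (mul_left_cancel₀ hc0.ne' h)
  have key := integral_image_eq_integral_abs_deriv_smul MeasurableSet.univ hderiv hinj
    (fun x => x⁻¹ * Real.exp (-a * x - b / x))
  rw [himg] at key
  rw [key]
  have hac : a * c = Real.sqrt (a * b) := by
    rw [← Real.sqrt_sq (by positivity : (0:ℝ) ≤ a * c)]
    congr 1
    rw [mul_pow, hc2]; field_simp
  have hbc : b / c = Real.sqrt (a * b) := by
    rw [← Real.sqrt_sq (by positivity : (0:ℝ) ≤ b / c)]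
    congr 1
    rw [div_pow, hc2]; field_simp
  have hexp : ∀ t : ℝ, |c * Real.exp t| •
      ((c * Real.exp t)⁻¹ * Real.exp (-a * (c * Real.exp t) - b / (c * Real.exp t)))
      = Real.exp (-k * Real.cosh t) := by
    intro t
    have he : (0:ℝ) < Real.exp t := Real.exp_pos t
    have h1 : |c * Real.exp t| = c * Real.exp t := abs_of_pos (by positivity)
    rw [smul_eq_mul, h1, ← mul_assoc, mul_inv_cancel₀ (by positivity), one_mul]
    congr 1
    have hb' : b = a * c ^ 2 := by rw [hc2]; field_simp
    have harg : -a * (c * Real.exp t) - b / (c * Real.exp t)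
        = -(Real.sqrt (a * b)) * Real.exp t - Real.sqrt (a * b) * Real.exp (-t) := by
      rw [← hac, hb', Real.exp_neg]
      field_simp
    rw [harg, hk, Real.cosh_eq]
    ring
  have : ∫ t : ℝ, |c * Real.exp t| •
      ((fun x => x⁻¹ * Real.exp (-a * x - b / x)) (c * Real.exp t))
      = ∫ t : ℝ, Real.exp (-k * Real.cosh t) := by
    simp only [hexp]
  rw [Measure.restrict_univ] at key ⊢
  rw [this]
  have habs : ∀ t : ℝ, Real.exp (-k * Real.cosh t) = Real.exp (-k * Real.cosh |t|) := by
    intro t; rw [Real.cosh_abs]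
  calc ∫ t : ℝ, Real.exp (-k * Real.cosh t)
      = ∫ t : ℝ, (fun s => Real.exp (-k * Real.cosh s)) |t| := by
        exact integral_congr_ae (Filter.Eventually.of_forall habs)
    _ = 2 * ∫ t in Set.Ioi (0:ℝ), Real.exp (-k * Real.cosh t) := integral_comp_abs (f := fun s => Real.exp (-k * Real.cosh s))
    _ = 2 * K0 k := rfl
end

section
/- For c > 0 and w ≥ 0, the Laplace transform of the zero-order Bessel kernel satisfies ∫₀^∞ exp(−c·t)·J₀(2√(w·t)) dt = (1/c)·exp(−w/c). -/
/-!
Since `J₀(2√x) = ∑ (-x)ⁿ / (n!)²` and `∫₀^∞ e^{-ct} tⁿ dt = n! / c^{n+1}`, integrating the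
series termwise gives `(1/c) ∑ (-w/c)ⁿ / n! = (1/c) e^{-w/c}`. The interchange of sum and
integral is legitimate because the series of absolute values sums to `(1/c) e^{w/c}`.
-/

open MeasureTheory Real

/-- Bessel function of the first kind of order zero, via its power series. -/
noncomputable def J0 (x : ℝ) : ℝ :=
  ∑' n : ℕ, (-1 : ℝ) ^ n / ((Nat.factorial n : ℝ) ^ 2) * (x / 2) ^ (2 * n)

open Set
open scoped Nat

theorem J0_two_mul_sqrt {x : ℝ} (hx : 0 ≤ x) :
    J0 (2 * √x) = ∑' n : ℕ, (-x) ^ n / (n ! : ℝ) ^ 2 := by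
  refine tsum_congr fun n => ?_
  rw [mul_div_cancel_left₀ _ two_ne_zero, pow_mul, sq_sqrt hx, neg_pow]
  ring

theorem integrableOn_exp_neg_mul_mul_pow {c : ℝ} (hc : 0 < c) (n : ℕ) :
    IntegrableOn (fun t : ℝ => exp (-c * t) * t ^ n) (Ioi 0) := by
  refine (integrableOn_rpow_mul_exp_neg_mul_rpow (s := n) (p := 1)
    (neg_one_lt_zero.trans_le n.cast_nonneg) one_pos hc).congr_fun (fun t _ => ?_)
    measurableSet_Ioi
  simp only [rpow_one, rpow_natCast, mul_comm]

theorem integral_exp_neg_mul_mul_pow {c : ℝ} (hc : 0 < c) (n : ℕ) :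
    ∫ t in Ioi (0 : ℝ), exp (-c * t) * t ^ n = n ! / c ^ (n + 1) := by
  have h := integral_rpow_mul_exp_neg_mul_Ioi (a := n + 1) (r := c) (by positivity) hc
  rw [add_sub_cancel_right, Gamma_nat_eq_factorial, ← Nat.cast_succ, rpow_natCast,
    one_div_pow, one_div_mul_eq_div] at h
  rw [← h]
  refine setIntegral_congr_fun measurableSet_Ioi fun t _ => ?_
  rw [rpow_natCast, neg_mul, mul_comm]

theorem integral_exp_neg_mul_mul_tsum {c : ℝ} (hc : 0 < c) {a : ℕ → ℝ}
    (ha : Summable fun n => |a n| * n ! / c ^ (n + 1)) :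
    ∫ t in Ioi (0 : ℝ), exp (-c * t) * ∑' n, a n * t ^ n =
      ∑' n, a n * n ! / c ^ (n + 1) := by
  set F : ℕ → ℝ → ℝ := fun n t => a n * (exp (-c * t) * t ^ n)
  have hF_int (n : ℕ) : IntegrableOn (F n) (Ioi 0) :=
    (integrableOn_exp_neg_mul_mul_pow hc n).const_mul (a n)
  have hF_norm (n : ℕ) : ∫ t in Ioi (0 : ℝ), ‖F n t‖ = |a n| * n ! / c ^ (n + 1) := by
    rw [mul_div_assoc, ← integral_exp_neg_mul_mul_pow hc, ← integral_const_mul]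
    refine setIntegral_congr_fun measurableSet_Ioi fun t ht => ?_
    rw [norm_mul, norm_eq_abs,
      norm_of_nonneg (mul_nonneg (exp_pos _).le (pow_nonneg ht.out.le n))]
  have hF_val (n : ℕ) : ∫ t in Ioi (0 : ℝ), F n t = a n * n ! / c ^ (n + 1) := by
    rw [integral_const_mul, integral_exp_neg_mul_mul_pow hc, mul_div_assoc]
  calc ∫ t in Ioi (0 : ℝ), exp (-c * t) * ∑' n, a n * t ^ n
      = ∫ t in Ioi (0 : ℝ), ∑' n, F n t := by
        refine setIntegral_congr_fun measurableSet_Ioi fun t _ => ?_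
        simp only [F, ← tsum_mul_left, mul_left_comm]
    _ = ∑' n, ∫ t in Ioi (0 : ℝ), F n t :=
        (integral_tsum_of_summable_integral_norm hF_int (by simpa only [hF_norm])).symm
    _ = ∑' n, a n * n ! / c ^ (n + 1) := tsum_congr hF_val

/-- Laplace transform of the zero-order Bessel kernel:
`∫₀^∞ exp(-c t) J₀(2√(w t)) dt = (1/c) exp(-w/c)` for `c > 0`, `w ≥ 0`. -/
theorem laplace_bessel_kernel (c w : ℝ) (hc : 0 < c) (hw : 0 ≤ w) :
    ∫ t in Set.Ioi (0 : ℝ), Real.exp (-c * t) * J0 (2 * Real.sqrt (w * t)) =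
      (1 / c) * Real.exp (-w / c) := by
  have hseries : ∀ t ∈ Ioi (0 : ℝ), exp (-c * t) * J0 (2 * √(w * t)) =
      exp (-c * t) * ∑' n, (-w) ^ n / (n ! : ℝ) ^ 2 * t ^ n := fun t ht => by
    simp_rw [J0_two_mul_sqrt (mul_nonneg hw ht.out.le), ← neg_mul, mul_pow, mul_div_right_comm]
  have hcoeff (x : ℝ) (n : ℕ) :
      x ^ n / (n ! : ℝ) ^ 2 * n ! / c ^ (n + 1) = (x / c) ^ n / n ! / c := by
    rw [div_pow]
    field_simp
    ring
  have hsum : Summable fun n => |(-w) ^ n / (n ! : ℝ) ^ 2| * n ! / c ^ (n + 1) := by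
    simp_rw [abs_div, abs_pow, abs_neg, abs_of_nonneg hw, Nat.abs_cast, hcoeff]
    exact (summable_pow_div_factorial _).div_const c
  rw [setIntegral_congr_fun measurableSet_Ioi hseries, integral_exp_neg_mul_mul_tsum hc hsum]
  simp_rw [hcoeff, tsum_div_const, neg_div, exp_eq_exp_ℝ,
    (NormedSpace.expSeries_div_hasSum_exp _).tsum_eq]
  ring
end
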